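/- arXiv:1605.01530 — 5 statements merged into one kernel-verified Lean document; each statement's English description precedes it below -/
import Mathlib

section
/- Let s be a series over A* with weights in K. Then s* = ⟨s(ε)*⟩ + ⟨s(ε)*⟩ · s_p · s*, where the products are Cauchy products, s(ε)* is the star in K of the constant term, and s_p is the proper part of s. (Weighted analogue of s* = ε + s·s* refined through the constant term.) -/
open scoped BigOperators

/-- A semiring equipped with a star operation satisfying `k* = 1 + k·k*` and
`k* = 1 + k*·k`. -/
class StarSR (K : Type*) extends Semiring K where
  kstar : K → K
  kstar_eq_one_add_mul_kstar : ∀ k : K, kstar k = 1 + k * kstar k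
  kstar_eq_one_add_kstar_mul : ∀ k : K, kstar k = 1 + kstar k * k

namespace WRatExp

noncomputable section

variable {A K : Type*}

/-- A formal power series over `A*` with weights in `K`. -/
abbrev Series (A K : Type*) := List A → K

section Basic
variable [Semiring K]

/-- The series `⟨k⟩` sending the empty word to `k` and every other word to `0`. -/
def sOne (k : K) : Series A K := fun w => match w with
  | [] => k
  | _ :: _ => 0

/-- Pointwise addition of series. -/
def sAdd (s t : Series A K) : Series A K := fun w => s w + t w

/-- The Cauchy product of series. -/
def sMul (s t : Series A K) : Series A K :=
  fun w => ∑ i ∈ Finset.range (w.length + 1), s (List.take i w) * t (List.drop i w)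

/-- Left exterior product `(k·s)(w) = k·s(w)`. -/
def lsmul (k : K) (s : Series A K) : Series A K := fun w => k * s w

/-- Right exterior product `(s·k)(w) = s(w)·k`. -/
def rsmul (s : Series A K) (k : K) : Series A K := fun w => s w * k

/-- The proper part of a series: agrees with `s` on nonempty words, `0` at `ε`. -/
def sProper (s : Series A K) : Series A K := fun w => match w with
  | [] => 0
  | _ :: _ => s w

/-- The conjunction (Hadamard product) of series. -/
def sConj (s t : Series A K) : Series A K := fun w => s w * t w

/-- Left quotient of a series by a letter: `(a⁻¹s)(w) = s(a::w)`. -/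
def aQuot (a : A) (s : Series A K) : Series A K := fun w => s (a :: w)

/-- Left quotient of a series by a word: `(u⁻¹s)(v) = s(u++v)`. -/
def wQuot (u : List A) (s : Series A K) : Series A K := fun w => s (u ++ w)

/-- Star of a proper series: the sum over all factorizations of the word into
nonempty factors of the products of the values of `s`. -/
def sStarP (s : Series A K) : List A → K
  | [] => 1
  | a :: w => ∑ i ∈ Finset.range (w.length + 1),
      s (a :: List.take i w) * sStarP s (List.drop i w)
  termination_by l => l.length
  decreasing_by simp only [List.length_drop, List.length_cons]; omega

end Basic

section Star
variable [StarSR K]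

/-- Star of an arbitrary series: `s* = (⟨s(ε)*⟩·s_p)*·⟨s(ε)*⟩`. -/
def sStar (s : Series A K) : Series A K :=
  sMul (sStarP (sMul (sOne (StarSR.kstar (s []))) (sProper s))) (sOne (StarSR.kstar (s [])))

end Star

section Compl
variable [Semiring K] [DecidableEq K]

/-- `k^c = 1` if `k = 0`, else `0`. -/
def kcompl (k : K) : K := if k = 0 then 1 else 0

/-- Complement of a series: `s^c(w) = s(w)^c`. -/
def sCompl (s : Series A K) : Series A K := fun w => kcompl (s w)

end Compl

/-- `a·r`: the series sending `a::w` to `r(w)` and every word not starting with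
`a` to `0`. -/
def aCons [Semiring K] [DecidableEq A] (a : A) (r : Series A K) : Series A K :=
  fun w => match w with
  | [] => 0
  | b :: v => if b = a then r v else 0

/-- Weighted extended rational expressions over alphabet `A` with weights in `K`. -/
inductive Exp (A K : Type*) : Type _ where
  | zero
  | one
  | letter (a : A)
  | add (e f : Exp A K)
  | lmul (k : K) (e : Exp A K)
  | rmul (e : Exp A K) (k : K)
  | mul (e f : Exp A K)
  | star (e : Exp A K)
  | conj (e f : Exp A K)
  | compl (e : Exp A K)

section Sem
variable [StarSR K] [DecidableEq K] [DecidableEq A]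

/-- The series denoted by an expression. -/
def sem : Exp A K → Series A K
  | .zero => fun _ => 0
  | .one => sOne 1
  | .letter a => fun w => if w = [a] then 1 else 0
  | .add e f => sAdd (sem e) (sem f)
  | .lmul k e => lsmul k (sem e)
  | .rmul e k => rsmul (sem e) k
  | .mul e f => sMul (sem e) (sem f)
  | .star e => sStar (sem e)
  | .conj e f => sConj (sem e) (sem f)
  | .compl e => sCompl (sem e)

end Sem

/-- A rational polynomial: a finitely supported function from expressions to `K`. -/
abbrev Poly (A K : Type*) [Zero K] := Exp A K →₀ K

section PolyOps
variable [Semiring K]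

/-- `P·F := ⊕ᵢ kᵢ⊙(Eᵢ·F)`. -/
def pMulExp (P : Poly A K) (F : Exp A K) : Poly A K :=
  Finsupp.mapDomain (fun E => Exp.mul E F) P

/-- `P·k := ⊕ᵢ kᵢ⊙(Eᵢ·k)`. -/
def pRmul (P : Poly A K) (k : K) : Poly A K :=
  Finsupp.mapDomain (fun E => Exp.rmul E k) P

/-- `P₁ & P₂ := ⊕_{i,j} (kᵢ·hⱼ)⊙(Eᵢ&Fⱼ)`. -/
def pConj (P Q : Poly A K) : Poly A K :=
  P.sum fun E kE => Q.sum fun F hF => Finsupp.single (Exp.conj E F) (kE * hF)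

/-- The expression `Σᵢ kᵢ·Eᵢ` summing a list of monomials. -/
def sumMon (l : List (K × Exp A K)) : Exp A K :=
  l.foldr (fun p acc => Exp.add (Exp.lmul p.1 p.2) acc) Exp.zero

variable [LinearOrder (Exp A K)]

/-- `expr(P) := Σᵢ kᵢ·Eᵢ`, the monomials being summed in the fixed canonical
linear order on expressions. -/
def pExpr (P : Poly A K) : Exp A K :=
  sumMon ((P.support.sort (· ≤ ·)).map fun E => (P E, E))

/-- `P^c := 1⊙(expr(P))^c`. -/
def pCompl (P : Poly A K) : Poly A K :=
  Finsupp.single (Exp.compl (pExpr P)) 1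

end PolyOps

/-- The series denoted by a polynomial: `⟦P⟧ := Σᵢ kᵢ·⟦Eᵢ⟧`. -/
def pSem [StarSR K] [DecidableEq K] [DecidableEq A] (P : Poly A K) : Series A K :=
  fun w => P.sum fun E k => k * sem E w

/-- A rational expansion: a constant term together with a finitely supported
map from letters to rational polynomials. -/
structure Expansion (A K : Type*) [Zero K] where
  ct : K
  terms : A →₀ Poly A K

section ExpansionOps
variable [Semiring K]

/-- Sum of expansions. -/
def xAdd (X Y : Expansion A K) : Expansion A K := ⟨X.ct + Y.ct, X.terms + Y.terms⟩

/-- Left exterior product of an expansion by a weight. -/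
def xLsmul (k : K) (X : Expansion A K) : Expansion A K :=
  ⟨k * X.ct, X.terms.mapRange (fun P => k • P) (smul_zero k)⟩

/-- Right exterior product of an expansion by a weight. -/
def xRmul (X : Expansion A K) (k : K) : Expansion A K :=
  ⟨X.ct * k, X.terms.mapRange (fun P => pRmul P k) (by simp [pRmul])⟩

/-- Right product of a (proper) expansion by an expression. -/
def xMulExp (X : Expansion A K) (F : Exp A K) : Expansion A K :=
  ⟨0, X.terms.mapRange (fun P => pMulExp P F) (by simp [pMulExp])⟩

/-- Proper part of an expansion. -/
def xProper (X : Expansion A K) : Expansion A K := ⟨0, X.terms⟩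

/-- Conjunction of expansions. -/
def xConj (X Y : Expansion A K) : Expansion A K :=
  ⟨X.ct * Y.ct, Finsupp.zipWith pConj (by simp [pConj]) X.terms Y.terms⟩

/-- Complement of an expansion. -/
def xCompl [DecidableEq K] [DecidableEq A] [Fintype A] [LinearOrder (Exp A K)]
    (X : Expansion A K) : Expansion A K :=
  ⟨kcompl X.ct,
   Finsupp.equivFunOnFinite.symm fun a =>
     if a ∈ X.terms.support then pCompl (X.terms a)
     else Finsupp.single (Exp.compl Exp.zero) 1⟩

end ExpansionOps

/-- The series denoted by an expansion:
`⟦X⟧ := ⟨X_ε⟩ + Σ_{a ∈ f(X)} a·⟦X_a⟧`. -/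
def xSem [StarSR K] [DecidableEq K] [DecidableEq A] (X : Expansion A K) : Series A K :=
  fun w => sOne X.ct w + ∑ a ∈ X.terms.support, aCons a (pSem (X.terms a)) w

section DExp
variable [StarSR K] [DecidableEq K] [DecidableEq A] [Fintype A] [LinearOrder (Exp A K)]

/-- The expansion `d(E)` of an expression `E`. -/
def dE : Exp A K → Expansion A K
  | .zero => ⟨0, 0⟩
  | .one => ⟨1, 0⟩
  | .letter a => ⟨0, Finsupp.single a (Finsupp.single Exp.one 1)⟩
  | .add e f => xAdd (dE e) (dE f)
  | .lmul k e => xLsmul k (dE e)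
  | .rmul e k => xRmul (dE e) k
  | .mul e f => xAdd (xMulExp (xProper (dE e)) f) (xLsmul (dE e).ct (dE f))
  | .star e => xAdd ⟨StarSR.kstar (dE e).ct, 0⟩
      (xLsmul (StarSR.kstar (dE e).ct) (xMulExp (xProper (dE e)) (Exp.star e)))
  | .conj e f => xConj (dE e) (dE f)
  | .compl e => xCompl (dE e)

/-- Evaluation of the expansion-based derived-term automaton of an expression
on a word: `eval(E, ε) = d(E)_ε` and
`eval(E, a::u) = Σ_{F ∈ supp d(E)_a} d(E)_a(F) · eval(F, u)`. -/
def evalDT : Exp A K → List A → K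
  | E, [] => (dE E).ct
  | E, _a :: u => ((dE E).terms _a).sum fun F k => k * evalDT F u
  termination_by _ u => u.length
  decreasing_by simp only [List.length_cons]; omega

end DExp

section Deriv
variable [StarSR K] [DecidableEq K]

/-- The constant term `c(E)` of an expression. -/
def cT : Exp A K → K
  | .zero => 0
  | .one => 1
  | .letter _ => 0
  | .add e f => cT e + cT f
  | .lmul k e => k * cT e
  | .rmul e k => cT e * k
  | .mul e f => cT e * cT f
  | .star e => StarSR.kstar (cT e)
  | .conj e f => cT e * cT f
  | .compl e => kcompl (cT e)

variable [DecidableEq A] [LinearOrder (Exp A K)]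

/-- The derivative `∂_a(E)` of an expression with respect to a letter,
a rational polynomial. -/
def deriv (a : A) : Exp A K → Poly A K
  | .zero => 0
  | .one => 0
  | .letter b => if b = a then Finsupp.single Exp.one 1 else 0
  | .add e f => deriv a e + deriv a f
  | .lmul k e => k • deriv a e
  | .rmul e k => pRmul (deriv a e) k
  | .mul e f => pMulExp (deriv a e) f + cT e • deriv a f
  | .star e => StarSR.kstar (cT e) • pMulExp (deriv a e) (Exp.star e)
  | .conj e f => pConj (deriv a e) (deriv a f)
  | .compl e => pCompl (deriv a e)

/-- Linear extension of derivation to polynomials: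
`∂_a(⊕ᵢ kᵢ⊙Eᵢ) := ⊕ᵢ kᵢ·∂_a(Eᵢ)`. -/
def pDeriv (a : A) (P : Poly A K) : Poly A K := P.sum fun E k => k • deriv a E

/-- Linear extension of the constant term to polynomials:
`c(⊕ᵢ kᵢ⊙Eᵢ) := Σᵢ kᵢ·c(Eᵢ)`. -/
def cP (P : Poly A K) : K := P.sum fun E k => k * cT E

/-- Derivation of a polynomial with respect to a word (left-to-right iteration
of letter derivation). -/
def wDerivP (u : List A) (P : Poly A K) : Poly A K :=
  u.foldl (fun Q a => pDeriv a Q) P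

/-- Derivation of an expression with respect to a word: `∂_{[a]}(E) = ∂_a(E)`
and `∂_{u++[a]}(E) = ∂_a(∂_u(E))`. -/
def wDeriv (u : List A) (E : Exp A K) : Poly A K := wDerivP u (Finsupp.single E 1)

end Deriv

section DerivedTerms
variable [Semiring K] [LinearOrder (Exp A K)]

/-- The set of derived terms `D(E)` of an expression. -/
def DT : Exp A K → Set (Exp A K)
  | .zero => ∅
  | .one => ∅
  | .letter _ => {Exp.one}
  | .add e f => DT e ∪ DT f
  | .lmul _ e => DT e
  | .rmul e k => (fun E' => Exp.rmul E' k) '' DT e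
  | .mul e f => (fun E' => Exp.mul E' f) '' DT e ∪ DT f
  | .star e => (fun E' => Exp.mul E' (Exp.star e)) '' DT e
  | .conj e f => Set.image2 Exp.conj (DT e) (DT f)
  | .compl e => { G | ∃ l : List (K × Exp A K),
      List.Chain' (· < ·) (l.map Prod.snd) ∧
      (∀ p ∈ l, p.2 ∈ DT e) ∧ G = Exp.compl (sumMon l) }

end DerivedTerms

/-- An expression contains no occurrence of the complement operator. -/
def complFree : Exp A K → Prop
  | .zero => True
  | .one => True
  | .letter _ => True
  | .add e f => complFree e ∧ complFree f
  | .lmul _ e => complFree e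
  | .rmul e _ => complFree e
  | .mul e f => complFree e ∧ complFree f
  | .star e => complFree e
  | .conj e f => complFree e ∧ complFree f
  | .compl _ => False

end

end WRatExp

open WRatExp

lemma sMul_sOne_apply {A K : Type*} [Semiring K] (u : Series A K) (k : K) (w : List A) :
    sMul u (sOne k) w = u w * k := by
  unfold sMul
  rw [Finset.sum_eq_single (w.length)]
  · simp [sOne]
  · intro i hi hne
    have hlt : i < w.length := by
      simp [Finset.mem_range] at hi; omega
    have : List.drop i w ≠ [] := by
      intro h
      have := List.drop_eq_nil_iff.mp h
      omega
    cases hd : List.drop i w with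
    | nil => exact absurd hd this
    | cons a l => simp [hd, sOne]
  · intro h
    simp [Finset.mem_range] at h

lemma sStarP_unfold {A K : Type*} [Semiring K] (t : Series A K) (ht : t [] = 0)
    (w : List A) :
    sStarP t w = sOne 1 w +
      ∑ i ∈ Finset.range (w.length + 1), t (List.take i w) * sStarP t (List.drop i w) := by
  cases w with
  | nil => simp [sStarP, sOne, ht]
  | cons a w =>
    rw [show sStarP t (a :: w) = ∑ i ∈ Finset.range (w.length + 1),
        t (a :: List.take i w) * sStarP t (List.drop i w) from by rw [sStarP]]
    simp only [List.length_cons, sOne]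
    rw [Finset.sum_range_succ' (fun i => t (List.take i (a :: w)) * sStarP t (List.drop i (a :: w)))]
    simp [ht]

/-- For a series `s` over `A*` with weights in `K`,
`s* = ⟨s(ε)*⟩ + ⟨s(ε)*⟩·s_p·s*`. -/
theorem series_star_eq {A K : Type*} [StarSR K] (s : Series A K) :
    sStar s =
      sAdd (sOne (StarSR.kstar (s [])))
        (sMul (sMul (sOne (StarSR.kstar (s []))) (sProper s)) (sStar s)) := by
  set k := StarSR.kstar (s []) with hk
  set t : Series A K := sMul (sOne k) (sProper s) with hT
  have ht : t [] = 0 := by simp [hT, sMul, sOne, sProper]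
  funext w
  show sMul (sStarP t) (sOne k) w = sAdd (sOne k) (sMul t (sMul (sStarP t) (sOne k))) w
  rw [sMul_sOne_apply, sAdd, sStarP_unfold t ht w, add_mul, Finset.sum_mul]
  congr 1
  · cases w <;> simp [sOne]
  · show _ = ∑ i ∈ Finset.range (w.length + 1),
        t (List.take i w) * sMul (sStarP t) (sOne k) (List.drop i w)
    refine Finset.sum_congr rfl fun i _ => ?_
    rw [sMul_sOne_apply, mul_assoc]
end

section
/- For all rational expansions X, Y, every weight k ∈ K, and every expression F: ⟦X ⊕ Y⟧ = ⟦X⟧ + ⟦Y⟧, ⟦k·X⟧ = k·⟦X⟧, ⟦X·k⟧ = ⟦X⟧·k, and, if X is proper (X_ε = 0), ⟦X·F⟧ = ⟦X⟧·⟦F⟧ (Cauchy product). -/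
open scoped BigOperators

open WRatExp

section Aux
variable {A K : Type*} [StarSR K] [DecidableEq K] [DecidableEq A]

lemma pSem_apply (P : Poly A K) (w : List A) :
    pSem P w = ∑ E ∈ P.support, P E * sem E w := rfl

lemma pSem_add (P Q : Poly A K) (w : List A) :
    pSem (P + Q) w = pSem P w + pSem Q w := by
  unfold pSem
  exact Finsupp.sum_add_index' (fun E => zero_mul _) (fun E k1 k2 => add_mul _ _ _)

lemma pSem_smul (k : K) (P : Poly A K) (w : List A) :
    pSem (k • P) w = k * pSem P w := by
  unfold pSem
  rw [Finsupp.sum_smul_index' (h := fun E c => c * sem E w) (fun E => zero_mul _), Finsupp.mul_sum]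
  exact Finsupp.sum_congr fun E _ => by rw [smul_eq_mul, mul_assoc]

lemma pSem_mapDomain (f : Exp A K → Exp A K) (P : Poly A K) (w : List A) :
    pSem (Finsupp.mapDomain f P) w = P.sum fun E c => c * sem (f E) w := by
  unfold pSem
  exact Finsupp.sum_mapDomain_index (fun E => zero_mul _) (fun E k1 k2 => add_mul _ _ _)

lemma xSem_nil (X : Expansion A K) : xSem X [] = X.ct := by
  simp [xSem, sOne, aCons]

lemma xSem_cons (X : Expansion A K) (b : A) (v : List A) :
    xSem X (b :: v) = pSem (X.terms b) v := by
  unfold xSem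
  simp only [sOne, aCons, zero_add]
  rw [Finset.sum_ite_eq]
  split_ifs with h
  · rfl
  · rw [Finsupp.notMem_support_iff.mp h]
    simp [pSem]

end Aux

/-- `⟦X ⊕ Y⟧ = ⟦X⟧ + ⟦Y⟧`, `⟦k·X⟧ = k·⟦X⟧`, `⟦X·k⟧ = ⟦X⟧·k`, and,
for proper `X`, `⟦X·F⟧ = ⟦X⟧·⟦F⟧`. -/
theorem expansion_sem_ops {A K : Type*} [StarSR K] [DecidableEq K] [DecidableEq A]
    (X Y : Expansion A K) (k : K) (F : Exp A K) :
    xSem (xAdd X Y) = sAdd (xSem X) (xSem Y) ∧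
    xSem (xLsmul k X) = lsmul k (xSem X) ∧
    xSem (xRmul X k) = rsmul (xSem X) k ∧
    (X.ct = 0 → xSem (xMulExp X F) = sMul (xSem X) (sem F)) := by
  refine ⟨?_, ?_, ?_, ?_⟩
  · funext w
    cases w with
    | nil => simp [sAdd, xSem_nil, xAdd]
    | cons b v =>
        show xSem (xAdd X Y) (b :: v) = xSem X (b :: v) + xSem Y (b :: v)
        rw [xSem_cons, xSem_cons, xSem_cons]
        show pSem ((X.terms + Y.terms) b) v = _
        rw [Finsupp.add_apply, pSem_add]
  · funext w
    cases w with
    | nil => simp [lsmul, xSem_nil, xLsmul]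
    | cons b v =>
        show xSem (xLsmul k X) (b :: v) = k * xSem X (b :: v)
        rw [xSem_cons, xSem_cons]
        show pSem ((X.terms.mapRange (fun P => k • P) (smul_zero k)) b) v = _
        rw [Finsupp.mapRange_apply, pSem_smul]
  · funext w
    cases w with
    | nil => simp [rsmul, xSem_nil, xRmul]
    | cons b v =>
        show xSem (xRmul X k) (b :: v) = xSem X (b :: v) * k
        rw [xSem_cons, xSem_cons]
        show pSem ((X.terms.mapRange (fun P => pRmul P k) (by simp [pRmul])) b) v = _
        rw [Finsupp.mapRange_apply]
        unfold pRmul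
        rw [pSem_mapDomain]
        show (X.terms b).sum (fun E c => c * (sem E v * k)) = _
        rw [pSem_apply, Finset.sum_mul, Finsupp.sum]
        exact Finset.sum_congr rfl fun E _ => (mul_assoc _ _ _).symm
  · intro hX
    funext w
    cases w with
    | nil =>
        rw [xSem_nil]
        show (xMulExp X F).ct = sMul (xSem X) (sem F) []
        simp [xMulExp, sMul, xSem_nil, hX]
    | cons b v =>
        rw [xSem_cons]
        show pSem ((X.terms.mapRange (fun P => pMulExp P F) (by simp [pMulExp])) b) v = _
        rw [Finsupp.mapRange_apply]
        unfold pMulExp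
        rw [pSem_mapDomain]
        have hL : (X.terms b).sum (fun E c => c * sMul (sem E) (sem F) v)
            = ∑ j ∈ Finset.range (v.length + 1),
                pSem (X.terms b) (v.take j) * sem F (v.drop j) := by
          rw [Finsupp.sum]
          simp only [sMul, Finset.mul_sum]
          rw [Finset.sum_comm]
          refine Finset.sum_congr rfl fun j _ => ?_
          rw [pSem_apply, Finset.sum_mul]
          exact Finset.sum_congr rfl fun E _ => (mul_assoc _ _ _).symm
        have hR : sMul (xSem X) (sem F) (b :: v)
            = ∑ j ∈ Finset.range (v.length + 1),
                pSem (X.terms b) (v.take j) * sem F (v.drop j) := by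
          show ∑ i ∈ Finset.range ((b :: v).length + 1),
              xSem X ((b :: v).take i) * sem F ((b :: v).drop i) = _
          rw [show (b :: v).length + 1 = (v.length + 1) + 1 from rfl,
            Finset.sum_range_succ']
          simp only [List.take_succ_cons, List.drop_succ_cons, List.take_zero,
            List.drop_zero]
          rw [xSem_nil, hX]
          simp only [zero_mul, add_zero]
          exact Finset.sum_congr rfl fun j _ => by rw [xSem_cons]
        rw [hR]
        exact hL
end

section
/- Let A be a finite type. For every weighted extended rational expression E over A with weights in K: the constant term of the expansion of E equals the constant term of E, d(E)_ε = c(E), and for every letter a ∈ A the polynomial of d(E) at a equals the derivative of E with respect to a, d(E)_a = ∂_a(E). -/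
open scoped BigOperators

/-!
Both identities are proved by structural induction on `E`: each clause of `d` is the
expansion-level counterpart of the corresponding clause of `c` and `∂_a`, once the
operations on expansions are read letter by letter. The only clause that is not literal
is the complement, where a letter outside the firsts of `d(E)` gets `1⊙(0^c)`; this is
`0^c` as a polynomial, because `expr(0)` is the empty sum `0`.
-/

namespace WRatExp

variable {A K : Type*}

section ExpansionOps

variable [Semiring K]

@[simp]
theorem xAdd_ct (X Y : Expansion A K) : (xAdd X Y).ct = X.ct + Y.ct := rfl

@[simp]
theorem xAdd_terms_apply (X Y : Expansion A K) (a : A) :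
    (xAdd X Y).terms a = X.terms a + Y.terms a := rfl

@[simp]
theorem xLsmul_ct (k : K) (X : Expansion A K) : (xLsmul k X).ct = k * X.ct := rfl

@[simp]
theorem xLsmul_terms_apply (k : K) (X : Expansion A K) (a : A) :
    (xLsmul k X).terms a = k • X.terms a := rfl

@[simp]
theorem xRmul_ct (X : Expansion A K) (k : K) : (xRmul X k).ct = X.ct * k := rfl

@[simp]
theorem xRmul_terms_apply (X : Expansion A K) (k : K) (a : A) :
    (xRmul X k).terms a = pRmul (X.terms a) k := rfl

@[simp]
theorem xMulExp_ct (X : Expansion A K) (F : Exp A K) : (xMulExp X F).ct = 0 := rfl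

@[simp]
theorem xMulExp_terms_apply (X : Expansion A K) (F : Exp A K) (a : A) :
    (xMulExp X F).terms a = pMulExp (X.terms a) F := rfl

@[simp]
theorem xProper_terms (X : Expansion A K) : (xProper X).terms = X.terms := rfl

@[simp]
theorem xConj_ct (X Y : Expansion A K) : (xConj X Y).ct = X.ct * Y.ct := rfl

@[simp]
theorem xConj_terms_apply (X Y : Expansion A K) (a : A) :
    (xConj X Y).terms a = pConj (X.terms a) (Y.terms a) := rfl

variable [LinearOrder (Exp A K)]

theorem pExpr_zero : pExpr (0 : Poly A K) = Exp.zero := by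
  simp [pExpr, sumMon]

theorem pCompl_zero : pCompl (0 : Poly A K) = Finsupp.single (Exp.compl Exp.zero) 1 := by
  rw [pCompl, pExpr_zero]

variable [DecidableEq K] [DecidableEq A] [Fintype A]

@[simp]
theorem xCompl_ct (X : Expansion A K) : (xCompl X).ct = kcompl X.ct := rfl

@[simp]
theorem xCompl_terms_apply (X : Expansion A K) (a : A) :
    (xCompl X).terms a = pCompl (X.terms a) := by
  simp only [xCompl, Finsupp.equivFunOnFinite_symm_apply_apply]
  split_ifs with ha
  · rfl
  · rw [Finsupp.notMem_support_iff.mp ha, pCompl_zero]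

end ExpansionOps

variable [StarSR K] [DecidableEq K] [DecidableEq A] [Fintype A] [LinearOrder (Exp A K)]

theorem dE_ct (E : Exp A K) : (dE E).ct = cT E := by
  induction E <;> simp_all [dE, cT]

theorem dE_terms_apply (a : A) (E : Exp A K) : (dE E).terms a = deriv a E := by
  induction E with
  | letter b => simp [dE, deriv, Finsupp.single_apply]
  | _ => simp_all [dE, deriv, dE_ct]

end WRatExp

open WRatExp

/-- `d(E)_ε = c(E)` and `d(E)_a = ∂_a(E)` for every letter `a`. -/
theorem expansion_constant_term_and_derivative {A K : Type*} [Fintype A] [DecidableEq A]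
    [StarSR K] [DecidableEq K] [LinearOrder (Exp A K)] (E : Exp A K) :
    (dE E).ct = cT E ∧ ∀ a : A, (dE E).terms a = deriv a E :=
  ⟨dE_ct E, fun a => dE_terms_apply a E⟩
end

section
/- For every weighted extended rational expression E over A with weights in K: if K is a finite type, or if E contains no occurrence of the complement operator, then the set of derived terms D(E) is finite. -/
open scoped BigOperators

open WRatExp

lemma finite_lists {α : Type*} {s : Set α} (hs : s.Finite) (n : ℕ) :
    {l : List α | (∀ x ∈ l, x ∈ s) ∧ l.length ≤ n}.Finite := by
  have := hs.to_subtype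
  have h1 := (List.finite_length_le s n).image (List.map Subtype.val)
  apply h1.subset
  rintro l ⟨hmem, hlen⟩
  exact ⟨l.pmap (fun x h => ⟨x, h⟩) hmem, by simpa using hlen,
    by simp [List.map_pmap]⟩

/-- if `K` is a finite type, or `E` contains no occurrence of the
complement operator, then the set of derived terms `D(E)` is finite. -/
theorem derived_terms_finite {A K : Type*} [Semiring K] [LinearOrder (Exp A K)]
    (E : Exp A K) (h : Finite K ∨ complFree E) :
    (DT E).Finite := by
  induction E with
  | zero => exact Set.finite_empty
  | one => exact Set.finite_empty
  | letter a => exact Set.finite_singleton _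
  | add e f ihe ihf =>
      exact (ihe (h.imp id And.left)).union (ihf (h.imp id And.right))
  | lmul k e ih => exact ih h
  | rmul e k ih => exact (ih h).image _
  | mul e f ihe ihf =>
      exact ((ihe (h.imp id And.left)).image _).union (ihf (h.imp id And.right))
  | star e ih => exact (ih h).image _
  | conj e f ihe ihf =>
      exact Set.Finite.image2 _ (ihe (h.imp id And.left)) (ihf (h.imp id And.right))
  | compl e ih =>
      rcases h with hK | hc
      · have hDTe := ih (Or.inl hK)
        have hu : ((Set.univ : Set K) ×ˢ DT e).Finite := Set.finite_univ.prod hDTe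
        have hT : {l : List (K × Exp A K) |
            (∀ x ∈ l, x ∈ (Set.univ : Set K) ×ˢ DT e) ∧
              l.length ≤ hDTe.toFinset.card}.Finite := finite_lists hu _
        apply (hT.image fun l => Exp.compl (sumMon l)).subset
        rintro G ⟨l, hchain, hmem, rfl⟩
        refine ⟨l, ⟨fun x hx => ⟨Set.mem_univ _, hmem x hx⟩, ?_⟩, rfl⟩
        have hnd : (l.map Prod.snd).Nodup := by
          refine ((List.isChain_iff_pairwise).mp hchain).imp ?_
          exact fun h => ne_of_lt h
        have hsub : (l.map Prod.snd).toFinset ⊆ hDTe.toFinset := by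
          intro x hx
          simp only [List.mem_toFinset, List.mem_map] at hx
          obtain ⟨p, hp, rfl⟩ := hx
          simpa using hmem p hp
        have := Finset.card_le_card hsub
        rwa [List.toFinset_card_of_nodup hnd, List.length_map] at this
      · exact absurd hc id
end

section
/- For every weighted extended rational expression E and every letter a ∈ A: the support of the polynomial ∂_a(E) is contained in the set of derived terms D(E), and for every derived term F ∈ D(E), the support of ∂_a(F) is contained in D(E). Equivalently, ∂_a(E) and every ∂_a(F) with F ∈ D(E) are K-linear combinations of elements of D(E). -/
open scoped BigOperators

open WRatExp

/-!
Induction on `E`, carrying the closure of `D(E)` under `∂_a` along. That second conjunct is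
what the induction needs: a derived term `E'·F` of `E·F` has derivative
`∂_a(E')·F ⊕ c(E')·∂_a(F)`, supported in `D(E·F)` because `D(E)` is closed under `∂_a` and
`D(F)` contains the support of `∂_a(F)` (likewise for `E'·E*`); and `∂_a` of a derived term
`(Σ kᵢ·Eᵢ)^c` of `E^c` is the complement of a polynomial supported on the supports of the
`∂_a(Eᵢ)`, `Eᵢ ∈ D(E)`.
-/

theorem Finsupp.coe_support_mapDomain_subset {α β M : Type*} [AddCommMonoid M] {f : α → β}
    {v : α →₀ M} {s : Set α} (h : ↑v.support ⊆ s) : ↑(v.mapDomain f).support ⊆ f '' s := by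
  classical
  calc ↑(v.mapDomain f).support ⊆ (↑(v.support.image f) : Set β) :=
        Finset.coe_subset.2 Finsupp.mapDomain_support
    _ = f '' ↑v.support := Finset.coe_image
    _ ⊆ f '' s := Set.image_mono h

namespace WRatExp

variable {A K : Type*}

section PolyOps
variable [Semiring K]

theorem coe_support_pConj_subset (P Q : Poly A K) :
    (↑(pConj P Q).support : Set (Exp A K)) ⊆ Set.image2 Exp.conj ↑P.support ↑Q.support := by
  classical
  intro x hx
  obtain ⟨E, hE, hx⟩ := Finset.mem_biUnion.1 (Finsupp.support_sum hx)
  obtain ⟨F, hF, hx⟩ := Finset.mem_biUnion.1 (Finsupp.support_sum hx)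
  obtain rfl := Finset.mem_singleton.1 (Finsupp.support_single_subset hx)
  exact ⟨E, hE, F, hF, rfl⟩

variable [LinearOrder (Exp A K)]

theorem compl_pExpr_mem_DT {e : Exp A K} {P : Poly A K} (hP : ↑P.support ⊆ DT e) :
    Exp.compl (pExpr P) ∈ DT (Exp.compl e) := by
  refine ⟨(P.support.sort (· ≤ ·)).map fun E => (P E, E), ?_, ?_, rfl⟩
  · rw [List.map_map, Function.comp_def, List.map_id']
    exact List.isChain_iff_pairwise.mpr (List.sortedLT_iff_pairwise.mp P.support.sortedLT_sort)
  · simp only [List.mem_map, Finset.mem_sort, forall_exists_index, and_imp]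
    rintro _ E hE rfl
    exact hP hE

theorem coe_support_pCompl_subset_DT {e : Exp A K} {P : Poly A K} (hP : ↑P.support ⊆ DT e) :
    ↑(pCompl P).support ⊆ DT (Exp.compl e) := by
  intro x hx
  obtain rfl := Finset.mem_singleton.1 (Finsupp.support_single_subset hx)
  exact compl_pExpr_mem_DT hP

end PolyOps

section Deriv
variable [StarSR K] [DecidableEq K] [DecidableEq A] [LinearOrder (Exp A K)]

theorem coe_support_deriv_sumMon_subset {a : A} {l : List (K × Exp A K)} {S : Set (Exp A K)}
    (hl : ∀ p ∈ l, ↑(deriv a p.2).support ⊆ S) : ↑(deriv a (sumMon l)).support ⊆ S := by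
  induction l with
  | nil => simp [sumMon, deriv]
  | cons p l ih =>
    intro x hx
    rcases Finset.mem_union.1 (Finsupp.support_add hx) with hx | hx
    · exact hl p List.mem_cons_self (Finsupp.support_smul hx)
    · exact ih (fun q hq => hl q (List.mem_cons_of_mem p hq)) hx

def DerivClosed (a : A) (E : Exp A K) : Prop :=
  (↑(deriv a E).support : Set (Exp A K)) ⊆ DT E ∧ ∀ F ∈ DT E, ↑(deriv a F).support ⊆ DT E

theorem coe_support_deriv_mul_subset {a : A} {G F : Exp A K} {S T : Set (Exp A K)}
    (hG : ↑(deriv a G).support ⊆ S) (hF : ↑(deriv a F).support ⊆ T) :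
    ↑(deriv a (G.mul F)).support ⊆ (fun E => E.mul F) '' S ∪ T := by
  intro x hx
  rcases Finset.mem_union.1 (Finsupp.support_add hx) with hx | hx
  · exact Or.inl (Finsupp.coe_support_mapDomain_subset hG hx)
  · exact Or.inr (hF (Finsupp.support_smul hx))

variable (a : A)

theorem derivClosed_zero : DerivClosed a (Exp.zero : Exp A K) :=
  ⟨by simp [deriv, DT], by simp [DT]⟩

theorem derivClosed_one : DerivClosed a (Exp.one : Exp A K) :=
  ⟨by simp [deriv, DT], by simp [DT]⟩

theorem derivClosed_letter (b : A) : DerivClosed a (Exp.letter b : Exp A K) := by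
  refine ⟨?_, by simp [DT, deriv]⟩
  simp only [deriv, DT]
  split_ifs
  · exact fun x hx => Finset.mem_singleton.1 (Finsupp.support_single_subset hx)
  · simp

variable {a}

theorem DerivClosed.add {e f : Exp A K} (he : DerivClosed a e) (hf : DerivClosed a f) :
    DerivClosed a (e.add f) := by
  refine ⟨fun x hx => (Finset.mem_union.1 (Finsupp.support_add hx)).imp (he.1 ·) (hf.1 ·), ?_⟩
  rintro F (hF | hF)
  · exact (he.2 F hF).trans Set.subset_union_left
  · exact (hf.2 F hF).trans Set.subset_union_right

theorem DerivClosed.lmul (k : K) {e : Exp A K} (he : DerivClosed a e) :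
    DerivClosed a (e.lmul k) :=
  ⟨(Finset.coe_subset.2 Finsupp.support_smul).trans he.1, he.2⟩

theorem DerivClosed.rmul {e : Exp A K} (he : DerivClosed a e) (k : K) :
    DerivClosed a (e.rmul k) := by
  refine ⟨Finsupp.coe_support_mapDomain_subset he.1, ?_⟩
  rintro _ ⟨E', hE', rfl⟩
  exact Finsupp.coe_support_mapDomain_subset (he.2 E' hE')

theorem DerivClosed.mul {e f : Exp A K} (he : DerivClosed a e) (hf : DerivClosed a f) :
    DerivClosed a (e.mul f) := by
  refine ⟨coe_support_deriv_mul_subset he.1 hf.1, ?_⟩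
  rintro F (⟨E', hE', rfl⟩ | hF)
  · exact coe_support_deriv_mul_subset (he.2 E' hE') hf.1
  · exact (hf.2 F hF).trans Set.subset_union_right

theorem DerivClosed.star {e : Exp A K} (he : DerivClosed a e) : DerivClosed a e.star := by
  have hstar : ↑(deriv a e.star).support ⊆ DT e.star :=
    (Finset.coe_subset.2 Finsupp.support_smul).trans
      (Finsupp.coe_support_mapDomain_subset he.1)
  refine ⟨hstar, ?_⟩
  rintro _ ⟨E', hE', rfl⟩
  simpa only [DT, Set.union_self] using coe_support_deriv_mul_subset (he.2 E' hE') hstar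

theorem DerivClosed.conj {e f : Exp A K} (he : DerivClosed a e) (hf : DerivClosed a f) :
    DerivClosed a (e.conj f) := by
  refine ⟨(coe_support_pConj_subset _ _).trans (Set.image2_subset he.1 hf.1), ?_⟩
  rintro _ ⟨E', hE', F', hF', rfl⟩
  exact (coe_support_pConj_subset _ _).trans (Set.image2_subset (he.2 E' hE') (hf.2 F' hF'))

theorem DerivClosed.compl {e : Exp A K} (he : DerivClosed a e) : DerivClosed a e.compl := by
  refine ⟨coe_support_pCompl_subset_DT he.1, ?_⟩
  rintro _ ⟨l, -, hl, rfl⟩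
  exact coe_support_pCompl_subset_DT
    (coe_support_deriv_sumMon_subset fun p hp => he.2 p.2 (hl p hp))

end Deriv

end WRatExp

/-- the support of `∂_a(E)` is contained in `D(E)`, and for every
derived term `F ∈ D(E)`, the support of `∂_a(F)` is contained in `D(E)`. -/
theorem deriv_support_subset_derived_terms {A K : Type*} [StarSR K] [DecidableEq K]
    [DecidableEq A] [LinearOrder (Exp A K)] (E : Exp A K) (a : A) :
    ↑(deriv a E).support ⊆ DT E ∧
    ∀ F ∈ DT E, ↑(deriv a F).support ⊆ DT E := by
  induction E with
  | zero => exact derivClosed_zero a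
  | one => exact derivClosed_one a
  | letter b => exact derivClosed_letter a b
  | add e f he hf => exact DerivClosed.add he hf
  | lmul k e he => exact DerivClosed.lmul k he
  | rmul e k he => exact DerivClosed.rmul he k
  | mul e f he hf => exact DerivClosed.mul he hf
  | star e he => exact DerivClosed.star he
  | conj e f he hf => exact DerivClosed.conj he hf
  | compl e he => exact DerivClosed.compl he
end
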